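/- arXiv:1212.5433 — 3 statements merged into one kernel-verified Lean document; each statement's English description precedes it below -/
import Mathlib

section
/- Let W be a group, H a subgroup of index 2, σ ∈ W \ H, and ρ : H → GL(n,ℂ) an irreducible representation. Suppose α ∈ GL(n,ℂ) satisfies ρ(σ⁻¹ w σ) = α⁻¹ · (ρ(w)ᵀ)⁻¹ · α for all w ∈ H. Then there exists a sign λ ∈ {1,-1} such that ρ(σ²) = λ · (αᵀ)⁻¹ · α. -/
/-!
Applying the hypothesis twice shows that conjugation by `σ²` acts on `ρ` as conjugation by
`γ = (αᵀ)⁻¹ α`, so `ρ(σ²) γ⁻¹` commutes with `ρ(H)` and is a scalar `c` by Schur's lemma.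
Since `σ⁻¹ σ² σ = σ²`, the hypothesis also applies to `ρ(σ²)` itself; `γ` satisfies the same
identity, so the scalar `c` is fixed by transpose-inverse, i.e. `c = c⁻¹`.
-/

open Matrix

namespace Matrix

variable {m K : Type*} [Fintype m] [DecidableEq m]

theorem exists_eq_smul_one_of_forall_commute [Field K] [IsAlgClosed K] [Nonempty m]
    {ι : Type*} (A : ι → Matrix m m K)
    (hA : ∀ p : Submodule K (m → K), (∀ i v, v ∈ p → A i *ᵥ v ∈ p) → p = ⊥ ∨ p = ⊤)
    {N : Matrix m m K} (hN : ∀ i, Commute (A i) N) : ∃ c : K, N = c • 1 := by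
  obtain ⟨c, hc⟩ := Module.End.exists_eigenvalue (toLin' N)
  have htop : Module.End.eigenspace (toLin' N) c = ⊤ := by
    refine (hA _ fun i v hv => ?_).resolve_left hc
    rw [Module.End.mem_eigenspace_iff, toLin'_apply] at hv ⊢
    rw [mulVec_mulVec, ← (hN i).eq, ← mulVec_mulVec, hv, mulVec_smul]
  refine ⟨c, toLin'.injective (LinearMap.ext fun v => ?_)⟩
  have hv : v ∈ Module.End.eigenspace (toLin' N) c := htop ▸ Submodule.mem_top
  rw [Module.End.mem_eigenspace_iff.1 hv, toLin'_apply, smul_mulVec, one_mulVec]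

variable [CommRing K]

def transposeInv : (Matrix m m K)ˣ →* (Matrix m m K)ˣ where
  toFun u := ⟨(↑u⁻¹ : Matrix m m K)ᵀ, (u : Matrix m m K)ᵀ,
    by rw [← transpose_mul, u.mul_inv, transpose_one],
    by rw [← transpose_mul, u.inv_mul, transpose_one]⟩
  map_one' := Units.ext <| by simp
  map_mul' u v := Units.ext <| by simp

theorem coe_transposeInv (u : (Matrix m m K)ˣ) :
    (transposeInv u : Matrix m m K) = (u : Matrix m m K)ᵀ⁻¹ := by
  rw [← transpose_nonsing_inv, ← coe_units_inv]
  rfl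

theorem transposeInv_involutive : Function.Involutive (transposeInv (m := m) (K := K)) :=
  fun u => Units.ext (transpose_transpose (u : Matrix m m K))

theorem transpose_mul_self_of_transposeInv_eq {u : (Matrix m m K)ˣ} (hu : transposeInv u = u) :
    (u : Matrix m m K)ᵀ * u = 1 := by
  nth_rw 2 [← hu]
  exact (transposeInv u).inv_mul

theorem mul_self_eq_one_of_transposeInv_eq [Nonempty m] {u : (Matrix m m K)ˣ} {c : K}
    (hc : (u : Matrix m m K) = c • 1) (hu : transposeInv u = u) : c * c = 1 := by
  have h := transpose_mul_self_of_transposeInv_eq hu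
  rw [hc, transpose_smul, transpose_one, smul_mul_smul_comm, one_mul] at h
  inhabit m
  simpa using congrFun (congrFun h default) default

end Matrix

section TwistedConjugation

variable {M : Type*} [Group M] {τ : M →* M}

theorem commute_mul_inv_of_inv_mul_mul_eq {a b x : M} (h : a⁻¹ * x * a = b⁻¹ * x * b) :
    Commute x (a * b⁻¹) :=
  calc x * (a * b⁻¹) = a * (a⁻¹ * x * a) * b⁻¹ := by group
    _ = a * (b⁻¹ * x * b) * b⁻¹ := by rw [h]
    _ = a * b⁻¹ * x := by group

theorem inv_mul_map_inv_mul_map_mul_mul (hτ : Function.Involutive τ) (α x : M) :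
    α⁻¹ * τ (α⁻¹ * τ x * α) * α = (τ α * α)⁻¹ * x * (τ α * α) := by
  simp only [map_mul, map_inv, hτ _]
  group

theorem map_mul_inv_eq_self_of_eq_inv_mul_map_mul (hτ : Function.Involutive τ) {α s : M}
    (hs : s = α⁻¹ * τ s * α) (hα : Commute α (s * (τ α * α)⁻¹)) :
    τ (s * (τ α * α)⁻¹) = s * (τ α * α)⁻¹ := by
  have hτs : τ s = α * s * α⁻¹ := by
    conv_rhs => rw [hs]
    group
  calc τ (s * (τ α * α)⁻¹) = α * (s * (τ α * α)⁻¹) * α⁻¹ := by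
        simp only [map_mul, map_inv, hτ α, hτs]
        group
    _ = s * (τ α * α)⁻¹ := by rw [hα.eq, mul_inv_cancel_right]

end TwistedConjugation

theorem stmt4_general (n : ℕ) (hn : 0 < n) (W : Type*) [Group W] (H : Subgroup W)
    (hH : H.index = 2) (σ : W)
    (ρ : H →* (Matrix (Fin n) (Fin n) ℂ)ˣ)
    (hirr : ∀ p : Submodule ℂ (Fin n → ℂ),
      (∀ (h : H) (v : Fin n → ℂ), v ∈ p →
        ((ρ h : (Matrix (Fin n) (Fin n) ℂ)ˣ) : Matrix (Fin n) (Fin n) ℂ).mulVec v ∈ p) →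
      p = ⊥ ∨ p = ⊤)
    (α : (Matrix (Fin n) (Fin n) ℂ)ˣ)
    (hα : ∀ (w : W) (hw : w ∈ H) (hw' : σ⁻¹ * w * σ ∈ H),
      ((ρ ⟨σ⁻¹ * w * σ, hw'⟩ : (Matrix (Fin n) (Fin n) ℂ)ˣ) : Matrix (Fin n) (Fin n) ℂ) =
        ((α : Matrix (Fin n) (Fin n) ℂ))⁻¹ *
          (((ρ ⟨w, hw⟩ : (Matrix (Fin n) (Fin n) ℂ)ˣ) : Matrix (Fin n) (Fin n) ℂ)ᵀ)⁻¹ *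
          (α : Matrix (Fin n) (Fin n) ℂ)) :
    ∃ lam : ℂ, (lam = 1 ∨ lam = -1) ∧
      ∀ h2 : σ * σ ∈ H,
        ((ρ ⟨σ * σ, h2⟩ : (Matrix (Fin n) (Fin n) ℂ)ˣ) : Matrix (Fin n) (Fin n) ℂ) =
          lam • ((((α : Matrix (Fin n) (Fin n) ℂ))ᵀ)⁻¹ * (α : Matrix (Fin n) (Fin n) ℂ)) := by
  have : Nonempty (Fin n) := ⟨⟨0, hn⟩⟩
  let φ : H → H := fun w => ⟨σ⁻¹ * w * σ, (Subgroup.normal_of_index_eq_two hH).conj_mem' _ w.2 σ⟩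
  have hρφ : ∀ w, ρ (φ w) = α⁻¹ * transposeInv (ρ w) * α := fun w => Units.ext <| by
    rw [hα w w.2, Units.val_mul, Units.val_mul, coe_transposeInv, coe_units_inv]
  let s : H := ⟨σ * σ, Subgroup.mul_self_mem_of_index_two hH σ⟩
  have hφφ : ∀ w, φ (φ w) = s⁻¹ * w * s := fun w => Subtype.ext <| by
    simp only [φ, s, Subgroup.coe_mul, Subgroup.coe_inv]
    group
  set γ := transposeInv α * α
  have hcomm : ∀ w : H, Commute (ρ w) (ρ s * γ⁻¹) := fun w =>
    commute_mul_inv_of_inv_mul_mul_eq <| by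
      rw [← map_inv, ← map_mul, ← map_mul, ← hφφ, hρφ, hρφ,
        inv_mul_map_inv_mul_map_mul_mul transposeInv_involutive]
  obtain ⟨c, hc⟩ := exists_eq_smul_one_of_forall_commute (fun w : H => (ρ w).val) hirr
    (N := (ρ s * γ⁻¹).val) fun w => (hcomm w).units_val
  have hs : ρ s = α⁻¹ * transposeInv (ρ s) * α := by
    rw [← hρφ]
    exact congrArg ρ (Subtype.ext (by simp only [φ, s]; group))
  have hself := map_mul_inv_eq_self_of_eq_inv_mul_map_mul transposeInv_involutive hs
    (Commute.units_of_val (by rw [hc]; exact (Commute.one_right _).smul_right c))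
  refine ⟨c, mul_self_eq_one_iff.1 (mul_self_eq_one_of_transposeInv_eq hc hself), fun _ => ?_⟩
  calc (ρ s).val = (ρ s * γ⁻¹ * γ).val := by rw [inv_mul_cancel_right]
    _ = _ := by rw [Units.val_mul, hc, smul_one_mul, Units.val_mul, coe_transposeInv]

/-- Given an index-2 subgroup `H ≤ W`, `σ ∈ W \ H`, an irreducible representation
`ρ : H → GL(n,ℂ)` and `α ∈ GL(n,ℂ)` intertwining `ρ ∘ (conjugation by σ)` with the
transpose-inverse dual of `ρ`, there is a sign `λ ∈ {1,-1}` with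
`ρ(σ²) = λ (αᵀ)⁻¹ α`. -/
theorem stmt4 (n : ℕ) (hn : 0 < n) (W : Type*) [Group W] (H : Subgroup W)
    (hH : H.index = 2) (σ : W) (hσ : σ ∉ H)
    (ρ : H →* (Matrix (Fin n) (Fin n) ℂ)ˣ)
    (hirr : ∀ p : Submodule ℂ (Fin n → ℂ),
      (∀ (h : H) (v : Fin n → ℂ), v ∈ p →
        ((ρ h : (Matrix (Fin n) (Fin n) ℂ)ˣ) : Matrix (Fin n) (Fin n) ℂ).mulVec v ∈ p) →
      p = ⊥ ∨ p = ⊤)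
    (α : (Matrix (Fin n) (Fin n) ℂ)ˣ)
    (hα : ∀ (w : W) (hw : w ∈ H) (hw' : σ⁻¹ * w * σ ∈ H),
      ((ρ ⟨σ⁻¹ * w * σ, hw'⟩ : (Matrix (Fin n) (Fin n) ℂ)ˣ) : Matrix (Fin n) (Fin n) ℂ) =
        ((α : Matrix (Fin n) (Fin n) ℂ))⁻¹ *
          (((ρ ⟨w, hw⟩ : (Matrix (Fin n) (Fin n) ℂ)ˣ) : Matrix (Fin n) (Fin n) ℂ)ᵀ)⁻¹ *
          (α : Matrix (Fin n) (Fin n) ℂ)) :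
    ∃ lam : ℂ, (lam = 1 ∨ lam = -1) ∧
      ∀ h2 : σ * σ ∈ H,
        ((ρ ⟨σ * σ, h2⟩ : (Matrix (Fin n) (Fin n) ℂ)ˣ) : Matrix (Fin n) (Fin n) ℂ) =
          lam • ((((α : Matrix (Fin n) (Fin n) ℂ))ᵀ)⁻¹ * (α : Matrix (Fin n) (Fin n) ℂ)) :=
  stmt4_general n hn W H hH σ ρ hirr α hα
end

section
/- Let W be a group, H a subgroup of index 2, and ρ : H → GL(n,ℂ) an irreducible representation. Suppose for some σ ∈ W \ H there exist α ∈ GL(n,ℂ) and λ ∈ {1,-1} with ρ(σ⁻¹ w σ) = α⁻¹ (ρ(w)ᵀ)⁻¹ α for all w ∈ H and ρ(σ²) = λ (αᵀ)⁻¹ α. Then for every σ' ∈ W \ H there exists α' ∈ GL(n,ℂ) such that the same two identities hold with σ', α' and the SAME sign λ. In particular the sign λ depends only on ρ, not on the choice of σ or α. -/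
/-!
Two elements of `W \ H` differ by an element of `H`: `σ' = σ h`. Twisting the intertwiner by
`ρ h`, i.e. taking `α' = α ρ(h)`, then gives both identities for `σ'`: the first because
conjugation by `σ'` is conjugation by `σ` followed by `h`, the second because
`σ' σ' = (σ σ) (σ⁻¹ h σ) h`, and the middle factor cancels the `α⁻¹ … α` picked up from the
first identity.
-/

open Matrix

section TwistedIntertwiner

variable {m R : Type*} [Fintype m] [DecidableEq m] [CommRing R]
  {W : Type*} [Group W] {H : Subgroup W}

/-- `α` intertwines `w ↦ ρ (σ⁻¹ w σ)` with the contragredient `w ↦ (ρ wᵀ)⁻¹` of `ρ`. -/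
def IsTwistedIntertwiner (ρ : H →* (Matrix m m R)ˣ) (σ : W) (α : (Matrix m m R)ˣ) : Prop :=
  ∀ (w : W) (hw : w ∈ H) (hw' : σ⁻¹ * w * σ ∈ H),
    ((ρ ⟨σ⁻¹ * w * σ, hw'⟩ : (Matrix m m R)ˣ) : Matrix m m R) =
      (α : Matrix m m R)⁻¹ * ((ρ ⟨w, hw⟩ : Matrix m m R)ᵀ)⁻¹ * α

variable {ρ : H →* (Matrix m m R)ˣ} {σ : W} {α : (Matrix m m R)ˣ}

theorem IsTwistedIntertwiner.mul_right (hα : IsTwistedIntertwiner ρ σ α) (h : H) :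
    IsTwistedIntertwiner ρ (σ * h) (α * ρ h) := by
  intro w hw hw'
  have hconj : σ⁻¹ * w * σ ∈ H := by
    simpa [mul_assoc] using H.mul_mem (H.mul_mem h.2 hw') (H.inv_mem h.2)
  have hsplit : (⟨(σ * h)⁻¹ * w * (σ * h), hw'⟩ : H) = h⁻¹ * ⟨σ⁻¹ * w * σ, hconj⟩ * h := by
    ext
    simp only [Subgroup.coe_mul, Subgroup.coe_inv]
    group
  rw [hsplit, map_mul, map_mul, Units.val_mul, Units.val_mul, hα w hw hconj, map_inv,
    coe_units_inv, Units.val_mul, Matrix.mul_inv_rev]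
  simp only [mul_assoc]

theorem IsTwistedIntertwiner.sq_mul_right (hα : IsTwistedIntertwiner ρ σ α) {lam : R}
    (hσσ : σ * σ ∈ H)
    (hsq : ((ρ ⟨σ * σ, hσσ⟩ : (Matrix m m R)ˣ) : Matrix m m R) =
      lam • (((α : Matrix m m R)ᵀ)⁻¹ * α))
    (h : H) (hσhσh : σ * h * (σ * h) ∈ H) :
    ((ρ ⟨σ * h * (σ * h), hσhσh⟩ : (Matrix m m R)ˣ) : Matrix m m R) =
      lam • ((((α * ρ h : (Matrix m m R)ˣ) : Matrix m m R)ᵀ)⁻¹ *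
        ((α * ρ h : (Matrix m m R)ˣ) : Matrix m m R)) := by
  have hconj : σ⁻¹ * h * σ ∈ H := by
    simpa [mul_assoc] using H.mul_mem (H.mul_mem (H.inv_mem hσσ) hσhσh) (H.inv_mem h.2)
  have hsplit : (⟨σ * h * (σ * h), hσhσh⟩ : H) = ⟨σ * σ, hσσ⟩ * ⟨σ⁻¹ * h * σ, hconj⟩ * h := by
    ext
    simp only [Subgroup.coe_mul]
    group
  have hαα : (α : Matrix m m R) * (α : Matrix m m R)⁻¹ = 1 := by
    rw [← coe_units_inv, Units.mul_inv]
  rw [hsplit, map_mul, map_mul, Units.val_mul, Units.val_mul, hsq, hα h h.2 hconj,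
    Units.val_mul, transpose_mul, Matrix.mul_inv_rev, smul_mul_assoc, smul_mul_assoc]
  congr 1
  set A : Matrix m m R := ↑α
  set P : Matrix m m R := ↑(ρ h)
  calc Aᵀ⁻¹ * A * (A⁻¹ * Pᵀ⁻¹ * A) * P = Aᵀ⁻¹ * (A * A⁻¹) * Pᵀ⁻¹ * (A * P) := by
        simp only [mul_assoc]
    _ = Aᵀ⁻¹ * Pᵀ⁻¹ * (A * P) := by rw [hαα, mul_one]

end TwistedIntertwiner

theorem stmt5_general (n : ℕ) (W : Type*) [Group W] (H : Subgroup W)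
    (hH : H.index = 2) (σ : W) (hσ : σ ∉ H)
    (ρ : H →* (Matrix (Fin n) (Fin n) ℂ)ˣ)
    (α : (Matrix (Fin n) (Fin n) ℂ)ˣ) (lam : ℂ)
    (hα : ∀ (w : W) (hw : w ∈ H) (hw' : σ⁻¹ * w * σ ∈ H),
      ((ρ ⟨σ⁻¹ * w * σ, hw'⟩ : (Matrix (Fin n) (Fin n) ℂ)ˣ) : Matrix (Fin n) (Fin n) ℂ) =
        ((α : Matrix (Fin n) (Fin n) ℂ))⁻¹ *
          (((ρ ⟨w, hw⟩ : (Matrix (Fin n) (Fin n) ℂ)ˣ) : Matrix (Fin n) (Fin n) ℂ)ᵀ)⁻¹ *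
          (α : Matrix (Fin n) (Fin n) ℂ))
    (hsq : ∀ h2 : σ * σ ∈ H,
      ((ρ ⟨σ * σ, h2⟩ : (Matrix (Fin n) (Fin n) ℂ)ˣ) : Matrix (Fin n) (Fin n) ℂ) =
        lam • ((((α : Matrix (Fin n) (Fin n) ℂ))ᵀ)⁻¹ * (α : Matrix (Fin n) (Fin n) ℂ))) :
    ∀ σ' : W, σ' ∉ H →
      ∃ α' : (Matrix (Fin n) (Fin n) ℂ)ˣ,
        (∀ (w : W) (hw : w ∈ H) (hw' : σ'⁻¹ * w * σ' ∈ H),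
          ((ρ ⟨σ'⁻¹ * w * σ', hw'⟩ : (Matrix (Fin n) (Fin n) ℂ)ˣ) : Matrix (Fin n) (Fin n) ℂ) =
            ((α' : Matrix (Fin n) (Fin n) ℂ))⁻¹ *
              (((ρ ⟨w, hw⟩ : (Matrix (Fin n) (Fin n) ℂ)ˣ) : Matrix (Fin n) (Fin n) ℂ)ᵀ)⁻¹ *
              (α' : Matrix (Fin n) (Fin n) ℂ)) ∧
        (∀ h2 : σ' * σ' ∈ H,
          ((ρ ⟨σ' * σ', h2⟩ : (Matrix (Fin n) (Fin n) ℂ)ˣ) : Matrix (Fin n) (Fin n) ℂ) =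
            lam • ((((α' : Matrix (Fin n) (Fin n) ℂ))ᵀ)⁻¹ *
              (α' : Matrix (Fin n) (Fin n) ℂ))) := by
  intro σ' hσ'
  have hh : σ⁻¹ * σ' ∈ H := by
    rw [Subgroup.mul_mem_iff_of_index_two hH, H.inv_mem_iff]
    exact iff_of_false hσ hσ'
  obtain ⟨h, rfl⟩ : ∃ h : H, σ * h = σ' := ⟨⟨σ⁻¹ * σ', hh⟩, mul_inv_cancel_left σ σ'⟩
  have hα' : IsTwistedIntertwiner ρ σ α := hα
  exact ⟨α * ρ h, hα'.mul_right h,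
    hα'.sq_mul_right (Subgroup.mul_self_mem_of_index_two hH σ) (hsq _) h⟩

/-- If the sign `λ` works for one choice of `σ ∈ W \ H` (with intertwiner `α`), then for
every `σ' ∈ W \ H` there is an intertwiner `α'` satisfying the same two identities with
the SAME sign `λ`: the sign depends only on the irreducible representation `ρ`. -/
theorem stmt5 (n : ℕ) (hn : 0 < n) (W : Type*) [Group W] (H : Subgroup W)
    (hH : H.index = 2) (σ : W) (hσ : σ ∉ H)
    (ρ : H →* (Matrix (Fin n) (Fin n) ℂ)ˣ)
    (hirr : ∀ p : Submodule ℂ (Fin n → ℂ),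
      (∀ (h : H) (v : Fin n → ℂ), v ∈ p →
        ((ρ h : (Matrix (Fin n) (Fin n) ℂ)ˣ) : Matrix (Fin n) (Fin n) ℂ).mulVec v ∈ p) →
      p = ⊥ ∨ p = ⊤)
    (α : (Matrix (Fin n) (Fin n) ℂ)ˣ) (lam : ℂ) (hlam : lam = 1 ∨ lam = -1)
    (hα : ∀ (w : W) (hw : w ∈ H) (hw' : σ⁻¹ * w * σ ∈ H),
      ((ρ ⟨σ⁻¹ * w * σ, hw'⟩ : (Matrix (Fin n) (Fin n) ℂ)ˣ) : Matrix (Fin n) (Fin n) ℂ) =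
        ((α : Matrix (Fin n) (Fin n) ℂ))⁻¹ *
          (((ρ ⟨w, hw⟩ : (Matrix (Fin n) (Fin n) ℂ)ˣ) : Matrix (Fin n) (Fin n) ℂ)ᵀ)⁻¹ *
          (α : Matrix (Fin n) (Fin n) ℂ))
    (hsq : ∀ h2 : σ * σ ∈ H,
      ((ρ ⟨σ * σ, h2⟩ : (Matrix (Fin n) (Fin n) ℂ)ˣ) : Matrix (Fin n) (Fin n) ℂ) =
        lam • ((((α : Matrix (Fin n) (Fin n) ℂ))ᵀ)⁻¹ * (α : Matrix (Fin n) (Fin n) ℂ))) :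
    ∀ σ' : W, σ' ∉ H →
      ∃ α' : (Matrix (Fin n) (Fin n) ℂ)ˣ,
        (∀ (w : W) (hw : w ∈ H) (hw' : σ'⁻¹ * w * σ' ∈ H),
          ((ρ ⟨σ'⁻¹ * w * σ', hw'⟩ : (Matrix (Fin n) (Fin n) ℂ)ˣ) : Matrix (Fin n) (Fin n) ℂ) =
            ((α' : Matrix (Fin n) (Fin n) ℂ))⁻¹ *
              (((ρ ⟨w, hw⟩ : (Matrix (Fin n) (Fin n) ℂ)ˣ) : Matrix (Fin n) (Fin n) ℂ)ᵀ)⁻¹ *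
              (α' : Matrix (Fin n) (Fin n) ℂ)) ∧
        (∀ h2 : σ' * σ' ∈ H,
          ((ρ ⟨σ' * σ', h2⟩ : (Matrix (Fin n) (Fin n) ℂ)ˣ) : Matrix (Fin n) (Fin n) ℂ) =
            lam • ((((α' : Matrix (Fin n) (Fin n) ℂ))ᵀ)⁻¹ *
              (α' : Matrix (Fin n) (Fin n) ℂ))) :=
  stmt5_general n W H hH σ hσ ρ α lam hα hsq
end

section
/- Let W be a group, H an index-2 subgroup, σ ∈ W \ H, and ρ : H → GL(n,ℂ) a homomorphism. Suppose α ∈ GL(n,ℂ) and λ ∈ {1,-1} satisfy ρ(σ⁻¹wσ) = α⁻¹(ρ(w)ᵀ)⁻¹α for all w ∈ H and ρ(σ²) = λ(αᵀ)⁻¹α. Let Ψ : W → (GL(n,ℂ)×GL(n,ℂ)) ⋊ ℤ/2ℤ be the associated parameter (Ψ(w) = (ρ(w), α⁻¹(ρ(w)ᵀ)⁻¹α) for w ∈ H, Ψ(σ) = σ₀·(1, ρ(σ²))). Then the vector (αᵀ)⁻¹ ∈ End(ℂⁿ) is fixed by Asai_λ ∘ Ψ, i.e. Asai_λ(Ψ(x))((αᵀ)⁻¹)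 = (αᵀ)⁻¹ for all x ∈ W. -/
/-!
For `w ∈ H`, `Asai_λ(Ψ w)` sends `X` to `ρ(w) X ρ(σ⁻¹wσ)ᵀ = ρ(w) X αᵀ ρ(w)⁻¹ (αᵀ)⁻¹`, which fixes
`X = (αᵀ)⁻¹`. For `σ`, the relation `ρ(σ²) = λ (αᵀ)⁻¹ α` gives
`Asai_λ(Ψ σ) X = λ² (αᵀ)⁻¹ α Xᵀ`, which fixes `(αᵀ)⁻¹` because `λ² = 1`. So the stabilizer of
`(αᵀ)⁻¹` contains `H` and `σ ∉ H`, and is therefore all of `W`, since `H` has index two.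
-/

open Matrix

noncomputable section

/-- The swap automorphism of `G × G`. -/
def swapAut (G : Type*) [Group G] : MulAut (G × G) := MulEquiv.prodComm

/-- The homomorphism `ℤ/2ℤ → Aut(G × G)` sending the nontrivial element to the swap. -/
def swapHom (G : Type*) [Group G] : Multiplicative (ZMod 2) →* MulAut (G × G) :=
  AddMonoidHom.toMultiplicativeLeft
    (ZMod.lift 2 ⟨zmultiplesHom (Additive (MulAut (G × G))) (Additive.ofMul (swapAut G)), by
      have h : swapAut G * swapAut G = 1 := by ext x <;> simp [swapAut, MulAut.mul_apply]
      show ((2 : ℕ) : ℤ) • Additive.ofMul (swapAut G) = 0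
      rw [Nat.cast_ofNat, two_zsmul, ← ofMul_mul, h, ofMul_one]⟩)

/-- The semidirect product `(G × G) ⋊ ℤ/2ℤ` where the nontrivial element swaps the factors. -/
abbrev SemiG (G : Type*) [Group G] :=
  SemidirectProduct (G × G) (Multiplicative (ZMod 2)) (swapHom G)

/-- The nontrivial element `σ₀` of `ℤ/2ℤ`, inside the semidirect product. -/
def sigma0 (G : Type*) [Group G] : SemiG G :=
  SemidirectProduct.inr (Multiplicative.ofAdd (1 : ZMod 2))

theorem Subgroup.eq_top_of_index_two_of_le {G : Type*} [Group G] {H K : Subgroup G}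
    (hH : H.index = 2) (hle : H ≤ K) {σ : G} (hσK : σ ∈ K) (hσH : σ ∉ H) : K = ⊤ := by
  refine eq_top_iff.mpr fun x _ => ?_
  by_cases hx : x ∈ H
  · exact hle hx
  · have hσx : σ⁻¹ * x ∈ H := by
      rw [mul_mem_iff_of_index_two hH, inv_mem_iff]
      tauto
    simpa using K.mul_mem hσK (hle hσx)

section

variable {m R : Type*} [Fintype m] [DecidableEq m] [CommRing R]

theorem Matrix.mul_transpose_inv_mul_transpose_conj_transpose_inv {M N : Matrix m m R}
    (hM : IsUnit M.det) (hN : IsUnit N.det) :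
    N * Mᵀ⁻¹ * (M⁻¹ * Nᵀ⁻¹ * M)ᵀ = Mᵀ⁻¹ := by
  have hMT : IsUnit Mᵀ.det := by rwa [det_transpose]
  rw [transpose_mul, transpose_mul, transpose_nonsing_inv, transpose_transpose,
    transpose_nonsing_inv]
  simp only [← mul_assoc]
  rw [mul_assoc N, nonsing_inv_mul _ hMT, mul_one, mul_nonsing_inv _ hN, one_mul]

theorem Matrix.smul_transpose_mul_smul_transpose_inv_mul {M : Matrix m m R} (hM : IsUnit M.det)
    {c : R} (hc : c * c = 1) :
    c • (Mᵀ⁻¹ * (c • (Mᵀ⁻¹ * M))ᵀ)ᵀ = Mᵀ⁻¹ := by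
  have h : Mᵀ⁻¹ * (c • (Mᵀ⁻¹ * M))ᵀ = c • M⁻¹ := by
    rw [transpose_smul, transpose_mul, transpose_nonsing_inv, transpose_transpose, Matrix.mul_smul,
      ← mul_assoc, nonsing_inv_mul _ (by rwa [det_transpose]), one_mul]
  rw [h, transpose_smul, smul_smul, hc, one_smul, transpose_nonsing_inv]

end

/-- Given the parameter `Ψ : W → (GL(n,ℂ) × GL(n,ℂ)) ⋊ ℤ/2ℤ` associated to
`ρ : H → GL(n,ℂ)`, `α` and the sign `λ` (with `ρ(σ⁻¹wσ) = α⁻¹ (ρ(w)ᵀ)⁻¹ α` and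
`ρ(σ²) = λ (αᵀ)⁻¹ α`), the vector `(αᵀ)⁻¹ ∈ End(ℂⁿ)` is fixed by `Asai_λ ∘ Ψ`. -/
theorem stmt13 (n : ℕ) (W : Type*) [Group W] (H : Subgroup W)
    (hH : H.index = 2) (σ : W) (hσ : σ ∉ H)
    (ρ : H →* (Matrix (Fin n) (Fin n) ℂ)ˣ)
    (α : (Matrix (Fin n) (Fin n) ℂ)ˣ) (lam : ℂ) (hlam : lam = 1 ∨ lam = -1)
    (hconj : ∀ (w : W) (hw : w ∈ H) (hw' : σ⁻¹ * w * σ ∈ H),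
      ((ρ ⟨σ⁻¹ * w * σ, hw'⟩ : (Matrix (Fin n) (Fin n) ℂ)ˣ) : Matrix (Fin n) (Fin n) ℂ) =
        ((α : Matrix (Fin n) (Fin n) ℂ))⁻¹ *
          (((ρ ⟨w, hw⟩ : (Matrix (Fin n) (Fin n) ℂ)ˣ) : Matrix (Fin n) (Fin n) ℂ)ᵀ)⁻¹ *
          (α : Matrix (Fin n) (Fin n) ℂ))
    (hsq : ∀ h2 : σ * σ ∈ H,
      ((ρ ⟨σ * σ, h2⟩ : (Matrix (Fin n) (Fin n) ℂ)ˣ) : Matrix (Fin n) (Fin n) ℂ) =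
        lam • ((((α : Matrix (Fin n) (Fin n) ℂ))ᵀ)⁻¹ * (α : Matrix (Fin n) (Fin n) ℂ)))
    (Ψ : W →* SemiG ((Matrix (Fin n) (Fin n) ℂ)ˣ))
    (hΨH : ∀ (w : W) (hw : w ∈ H) (hw' : σ⁻¹ * w * σ ∈ H),
      Ψ w = SemidirectProduct.inl (ρ ⟨w, hw⟩, ρ ⟨σ⁻¹ * w * σ, hw'⟩))
    (hΨσ : ∀ h2 : σ * σ ∈ H,
      Ψ σ = sigma0 _ * SemidirectProduct.inl (1, ρ ⟨σ * σ, h2⟩))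
    (A : SemiG ((Matrix (Fin n) (Fin n) ℂ)ˣ) →* (Module.End ℂ (Matrix (Fin n) (Fin n) ℂ))ˣ)
    (hA1 : ∀ (g g' : (Matrix (Fin n) (Fin n) ℂ)ˣ) (X : Matrix (Fin n) (Fin n) ℂ),
      ((A (SemidirectProduct.inl (g, g')) : (Module.End ℂ (Matrix (Fin n) (Fin n) ℂ))ˣ) :
          Module.End ℂ (Matrix (Fin n) (Fin n) ℂ)) X =
        (g : Matrix (Fin n) (Fin n) ℂ) * X * ((g' : Matrix (Fin n) (Fin n) ℂ))ᵀ)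
    (hA2 : ∀ X : Matrix (Fin n) (Fin n) ℂ,
      ((A (sigma0 _) : (Module.End ℂ (Matrix (Fin n) (Fin n) ℂ))ˣ) :
          Module.End ℂ (Matrix (Fin n) (Fin n) ℂ)) X = lam • Xᵀ) :
    ∀ x : W,
      ((A (Ψ x) : (Module.End ℂ (Matrix (Fin n) (Fin n) ℂ))ˣ) :
          Module.End ℂ (Matrix (Fin n) (Fin n) ℂ))
        ((((α : Matrix (Fin n) (Fin n) ℂ))ᵀ)⁻¹) =
      (((α : Matrix (Fin n) (Fin n) ℂ))ᵀ)⁻¹ := by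
  set M : Matrix (Fin n) (Fin n) ℂ := (α : Matrix (Fin n) (Fin n) ℂ)
  have hM : IsUnit M.det := (isUnit_iff_isUnit_det M).mp α.isUnit
  have hlam2 : lam * lam = 1 := by rcases hlam with rfl | rfl <;> norm_num
  have fix_of_mem : ∀ w ∈ H, (A (Ψ w) : Module.End ℂ _) Mᵀ⁻¹ = Mᵀ⁻¹ := by
    intro w hw
    have hw' : σ⁻¹ * w * σ ∈ H := by
      simpa using (Subgroup.normal_of_index_eq_two hH).conj_mem w hw σ⁻¹
    rw [hΨH w hw hw', hA1, hconj w hw hw']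
    exact mul_transpose_inv_mul_transpose_conj_transpose_inv hM
      ((isUnit_iff_isUnit_det _).mp (ρ ⟨w, hw⟩).isUnit)
  have fix_σ : (A (Ψ σ) : Module.End ℂ _) Mᵀ⁻¹ = Mᵀ⁻¹ := by
    have hσσ := H.mul_self_mem_of_index_two hH σ
    rw [hΨσ hσσ, map_mul, Units.val_mul, Module.End.mul_apply, hA1, hA2, hsq hσσ,
      Units.val_one, one_mul]
    exact smul_transpose_mul_smul_transpose_inv_mul hM hlam2
  have hstab : (MulAction.stabilizer _ Mᵀ⁻¹).comap (A.comp Ψ) = ⊤ :=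
    Subgroup.eq_top_of_index_two_of_le hH fix_of_mem fix_σ hσ
  exact (Subgroup.eq_top_iff' _).mp hstab
end
end
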